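/- Let (G,*) be a group, k ≥ 1 and 1 ≤ m ≤ k. Suppose f_n : G^{k+1} → G (n ≥ 0), h : G^{k−m+1} → G and g_n : G^m → G (n ≥ 0) satisfy the semiconjugacy identity f_n(u_0,…,u_k) * h(u_0,…,u_{k−m}) = g_n(u_0 * h(u_1,…,u_{k−m+1}), u_1 * h(u_2,…,u_{k−m+2}), …, u_{m−1} * h(u_m,…,u_k)) for all u_0,…,u_k ∈ G and all n ≥ 0. Define H : G^{k+1} → G^m by H(u_0,…,u_k) = (u_0 * h(u_1,…,u_{k+1−m}), …, u_{m−1} * h(u_m,…,u_k)), let F_n : G^{k+1} → G^{k+1} be the unfolding F_n(u_0,…,u_k) = (f_n(u_0,…,u_k), u_0, …, u_{k−1}), and let Φ_n : G^m → G^m be the unfolding of g_n, i.e. Φ_n(t_1,…,t_m) = (g_n(t_1,…,t_m), t_1, …, t_{m−1}). Then H ∘ F_n = Φ_n ∘ H for every n ≥ 0; in particular, each semiconjugate factor Φ_n is of scalar type. -/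
import Mathlib


/-- If the semiconjugacy identity holds, then with `H` the
order-reducing form symmetry, `F_n` the unfolding of `f_n` and `Φ_n` the unfolding of
`g_n` (so each `Φ_n` is of scalar type), we have `H ∘ F_n = Φ_n ∘ H` for every `n`. -/
theorem stmt_3 {G : Type*} [Group G] (k m : ℕ) (hk : 1 ≤ k) (hm1 : 1 ≤ m) (hmk : m ≤ k)
    (f : ℕ → (Fin (k + 1) → G) → G)
    (h : (Fin (k - m + 1) → G) → G)
    (g : ℕ → (Fin m → G) → G)
    (hsc : ∀ (n : ℕ) (u : Fin (k + 1) → G),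
      f n u * h (fun i => u ⟨i.val, by have := i.isLt; omega⟩) =
        g n (fun j => u ⟨j.val, by have := j.isLt; omega⟩ *
          h (fun i => u ⟨j.val + 1 + i.val, by have := i.isLt; have := j.isLt; omega⟩))) :
    ∀ n : ℕ,
      (fun u : Fin (k + 1) → G =>
          fun j : Fin m => u ⟨j.val, by have := j.isLt; omega⟩ *
            h (fun i => u ⟨j.val + 1 + i.val, by have := i.isLt; have := j.isLt; omega⟩)) ∘
        (fun u : Fin (k + 1) → G =>
          fun i : Fin (k + 1) =>
            if i.val = 0 then f n u else u ⟨i.val - 1, by have := i.isLt; omega⟩) =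
      (fun v : Fin m → G =>
          fun j : Fin m =>
            if j.val = 0 then g n v else v ⟨j.val - 1, by have := j.isLt; omega⟩) ∘
        (fun u : Fin (k + 1) → G =>
          fun j : Fin m => u ⟨j.val, by have := j.isLt; omega⟩ *
            h (fun i => u ⟨j.val + 1 + i.val, by have := i.isLt; have := j.isLt; omega⟩)) := by
  intro n
  funext u
  funext j
  simp only [Function.comp_apply]
  rcases j with ⟨jv, hj⟩
  cases jv with
  | zero =>
    simp only [if_true, Nat.add_eq, Nat.succ_ne_zero, ite_false, ite_true]
    have h1 : (fun i : Fin (k - m + 1) =>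
        (if (0 + 1 + i.val) = 0 then f n u else u ⟨0 + 1 + i.val - 1, by have := i.isLt; omega⟩))
        = fun i : Fin (k - m + 1) => u ⟨i.val, by have := i.isLt; omega⟩ := by
      funext i
      rw [if_neg (by omega)]
      exact congrArg u (Fin.ext (show 0 + 1 + (i:ℕ) - 1 = (i:ℕ) by omega))
    rw [h1, hsc n u]
  | succ p =>
    have h2 : ∀ i : ℕ, p + 1 + 1 + i ≠ 0 := by omega
    simp only [Nat.succ_ne_zero, ite_false, if_neg (h2 _), Nat.add_sub_cancel,
      Nat.succ_sub_one]
    exact congrArg _ (congrArg h (funext fun i =>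
      congrArg u (Fin.ext (show p + 1 + 1 + (i:ℕ) - 1 = p + 1 + (i:ℕ) by omega))))
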